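/- For commuting positive semidefinite matrices Σ₁, Σ₂, the quantity Tr(Σ₁ + Σ₂ − 2(Σ₁^{1/2}Σ₂Σ₁^{1/2})^{1/2}) is bounded above by Tr(|Σ₁ − Σ₂|), the nuclear norm of Σ₁ − Σ₂. Consequently, W₂²(N(μ₁,Σ₁), N(μ₂,Σ₂)) ≤ ‖μ₁ − μ₂‖₂² + ‖Σ₁ − Σ₂‖₊, where ‖·‖₊ denotes the nuclear norm. -/

import Mathlib

open Matrix

open scoped ComplexOrder in
/-- `Matrix.PosSemidef.sqrt` was removed from Mathlib; restored here with its old definition. -/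
noncomputable def Matrix.PosSemidef.sqrt {n 𝕜 : Type*} [Fintype n] [DecidableEq n] [RCLike 𝕜]
    {A : Matrix n n 𝕜} (hA : A.PosSemidef) : Matrix n n 𝕜 :=
  (hA.1.eigenvectorUnitary : Matrix n n 𝕜) * diagonal (((↑) : ℝ → 𝕜) ∘ (√·) ∘ hA.1.eigenvalues) *
    (star hA.1.eigenvectorUnitary : Matrix n n 𝕜)

namespace Matrix.PosSemidef

variable {m : Type*} [Fintype m] [DecidableEq m]

lemma sqrt_eq_cfc {A : Matrix m m ℝ} (hA : A.PosSemidef) : hA.sqrt = cfc Real.sqrt A := by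
  rw [hA.1.cfc_eq, IsHermitian.cfc, Unitary.conjStarAlgAut_apply]
  rfl

lemma spec_nonneg {A : Matrix m m ℝ} (hA : A.PosSemidef) : ∀ x ∈ spectrum ℝ A, 0 ≤ x := by
  intro x hx
  rw [hA.1.spectrum_real_eq_range_eigenvalues] at hx
  obtain ⟨i, rfl⟩ := hx
  exact hA.eigenvalues_nonneg i

lemma posSemidef_sqrt {A : Matrix m m ℝ} (hA : A.PosSemidef) : hA.sqrt.PosSemidef := by
  unfold Matrix.PosSemidef.sqrt
  rw [Matrix.star_eq_conjTranspose]
  apply PosSemidef.mul_mul_conjTranspose_same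
  rw [posSemidef_diagonal_iff]
  intro i
  simp [Real.sqrt_nonneg]

lemma sq_sqrt {A : Matrix m m ℝ} (hA : A.PosSemidef) : hA.sqrt ^ 2 = A := by
  rw [sqrt_eq_cfc, ← cfc_pow Real.sqrt 2 A (ha := hA.1.isSelfAdjoint)]
  conv_rhs => rw [← cfc_id' (R := ℝ) (a := A) (ha := hA.1.isSelfAdjoint)]
  exact cfc_congr fun x hx => Real.sq_sqrt (spec_nonneg hA x hx)

lemma sqrt_mul_self {A : Matrix m m ℝ} (hA : A.PosSemidef) : hA.sqrt * hA.sqrt = A := by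
  rw [← pow_two, sq_sqrt]

lemma eq_sqrt_of_sq_eq {A B : Matrix m m ℝ} (hB : B.PosSemidef) (hA : A.PosSemidef)
    (h : B ^ 2 = A) : B = hA.sqrt := by
  rw [sqrt_eq_cfc, ← h, ← cfc_comp_pow Real.sqrt 2 B (ha := hB.1.isSelfAdjoint)]
  conv_lhs => rw [← cfc_id' (R := ℝ) (a := B) (ha := hB.1.isSelfAdjoint)]
  exact cfc_congr fun x hx => (Real.sqrt_sq (spec_nonneg hB x hx)).symm

end Matrix.PosSemidef

open Matrix Finset

namespace WassersteinAux

variable {m : Type*} [Fintype m] [DecidableEq m]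

lemma conj_mul {U : Matrix m m ℝ} (hU : star U * U = 1) (X Y : Matrix m m ℝ) :
    (U * X * star U) * (U * Y * star U) = U * (X * Y) * star U := by
  have h : star U * (U * (Y * star U)) = Y * star U := by
    rw [← Matrix.mul_assoc, hU, Matrix.one_mul]
  simp only [Matrix.mul_assoc, h]

lemma conj_pow {U : Matrix m m ℝ} (hU1 : U * star U = 1) (hU2 : star U * U = 1)
    (d : m → ℝ) (k : ℕ) :
    (U * diagonal d * star U) ^ k = U * diagonal (fun i => d i ^ k) * star U := by
  induction k with
  | zero => simp [hU1]
  | succ k ih =>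
      rw [pow_succ, ih, conj_mul hU2, diagonal_mul_diagonal]
      simp only [← pow_succ]

lemma diagonal_sum {ι : Type*} (s : Finset ι) (f : ι → m → ℝ) :
    diagonal (fun i => ∑ k ∈ s, f k i) = ∑ k ∈ s, diagonal (f k) := by
  ext i j
  simp only [Matrix.sum_apply, diagonal_apply]
  split <;> simp

lemma conj_diag_congr {U : Matrix m m ℝ} {f g : m → ℝ} (h : ∀ i, f i = g i) :
    U * diagonal f * star U = U * diagonal g * star U := by
  rw [show f = g from funext h]

lemma smul_diag {c : ℝ} {f : m → ℝ} :
    c • (diagonal f : Matrix m m ℝ) = diagonal (fun i => c * f i) := by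
  ext i j
  by_cases hij : i = j <;> simp [hij]

lemma sqrt_commute {A X : Matrix m m ℝ} (hA : A.PosSemidef) (h : Commute X A) :
    Commute X hA.sqrt := by
  set U : Matrix m m ℝ := (hA.1.eigenvectorUnitary : Matrix m m ℝ) with hUdef
  have hU1 : U * star U = 1 := (mem_unitaryGroup_iff).mp hA.1.eigenvectorUnitary.2
  have hU2 : star U * U = 1 := (mem_unitaryGroup_iff').mp hA.1.eigenvectorUnitary.2
  set d : m → ℝ := hA.1.eigenvalues with hddef
  have hspec : A = U * diagonal d * star U := by
    have := hA.1.spectral_theorem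
    simpa [RCLike.ofReal_real_eq_id] using this
  set s : Finset ℝ := Finset.image d Finset.univ with hsdef
  set p : Polynomial ℝ := Lagrange.interpolate s id Real.sqrt with hpdef
  have hval : ∀ i, p.eval (d i) = Real.sqrt (d i) := by
    intro i
    have hi : d i ∈ s := Finset.mem_image_of_mem d (Finset.mem_univ i)
    rw [hpdef]
    simpa using Lagrange.eval_interpolate_at_node Real.sqrt (Set.injOn_id _) hi
  have hsum : (∑ k ∈ Finset.range (p.natDegree + 1), p.coeff k • A ^ k)
      = U * diagonal (fun i => Real.sqrt (d i)) * star U := by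
    have h1 : ∀ k : ℕ, p.coeff k • A ^ k
        = U * diagonal (fun i => p.coeff k * d i ^ k) * star U := by
      intro k
      rw [hspec, conj_pow hU1 hU2, ← smul_diag]
      simp only [Matrix.mul_smul, Matrix.smul_mul]
    simp_rw [h1]
    rw [← Finset.sum_mul, ← Finset.mul_sum, ← diagonal_sum]
    exact conj_diag_congr fun i => by rw [← hval i, Polynomial.eval_eq_sum_range]
  have hN : (U * diagonal (fun i => Real.sqrt (d i)) * star U).PosSemidef := by
    have : (diagonal (fun i => Real.sqrt (d i)) : Matrix m m ℝ).PosSemidef :=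
      posSemidef_diagonal_iff.mpr fun i => Real.sqrt_nonneg _
    simpa [Matrix.star_eq_conjTranspose] using this.mul_mul_conjTranspose_same U
  have hNsq : (U * diagonal (fun i => Real.sqrt (d i)) * star U) ^ 2 = A := by
    rw [pow_two, conj_mul hU2, diagonal_mul_diagonal, hspec]
    exact conj_diag_congr fun i => Real.mul_self_sqrt (hA.eigenvalues_nonneg i)
  have hkey : hA.sqrt = ∑ k ∈ Finset.range (p.natDegree + 1), p.coeff k • A ^ k := by
    rw [hsum]
    exact (hN.eq_sqrt_of_sq_eq hA hNsq).symm
  rw [hkey]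
  exact Commute.sum_right _ _ _ fun k _ => ((h.pow_right k).smul_right _)

lemma trace_nonneg {A : Matrix m m ℝ} (hA : A.PosSemidef) : 0 ≤ A.trace := by
  rw [Matrix.trace]
  apply Finset.sum_nonneg
  intro i _
  exact hA.diag_nonneg

lemma trace_mul_nonneg {A B : Matrix m m ℝ} (hA : A.PosSemidef) (hB : B.PosSemidef) :
    0 ≤ (A * B).trace := by
  have h1 : A * B = hA.sqrt * (hA.sqrt * B) := by
    rw [← Matrix.mul_assoc, hA.sqrt_mul_self]
  have h2 : (A * B).trace = (hA.sqrt * B * hA.sqrt).trace := by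
    rw [h1, Matrix.trace_mul_comm, Matrix.mul_assoc]
  rw [h2]
  have h3 : (hA.sqrt * B * hA.sqrt).PosSemidef := by
    have := hB.mul_mul_conjTranspose_same hA.sqrt
    rwa [hA.posSemidef_sqrt.1.eq] at this
  exact trace_nonneg h3

lemma psd_mul_of_commute {A B : Matrix m m ℝ} (hA : A.PosSemidef) (hB : B.PosSemidef)
    (h : Commute A B) : (A * B).PosSemidef := by
  have hc : Commute B hA.sqrt := sqrt_commute hA h.symm
  have h1 : hA.sqrt * B * hA.sqrt = A * B := by
    rw [Matrix.mul_assoc, hc.eq, ← Matrix.mul_assoc, hA.sqrt_mul_self]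
  rw [← h1]
  have := hB.mul_mul_conjTranspose_same hA.sqrt
  rwa [hA.posSemidef_sqrt.1.eq] at this

lemma max_scalar (a : ℝ) : max a 0 - max (-a) 0 = a ∧ max a 0 * max (-a) 0 = 0 ∧
    (max a 0 + max (-a) 0) * (max a 0 + max (-a) 0) = a * a := by
  rcases le_total 0 a with h | h
  · have h1 : max a 0 = a := max_eq_left h
    have h2 : max (-a) 0 = 0 := max_eq_right (by linarith)
    rw [h1, h2]
    refine ⟨by ring, by ring, by ring⟩
  · have h1 : max a 0 = 0 := max_eq_right h
    have h2 : max (-a) 0 = -a := max_eq_left (by linarith)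
    rw [h1, h2]
    refine ⟨by ring, by ring, by ring⟩

lemma posPart {E : Matrix m m ℝ} (hE : E.IsHermitian) :
    ∃ P Q : Matrix m m ℝ, P.PosSemidef ∧ Q.PosSemidef ∧ E = P - Q ∧ P * Q = 0 ∧ Q * P = 0 ∧
      (P + Q).PosSemidef ∧ (P + Q) ^ 2 = E ^ 2 := by
  set U : Matrix m m ℝ := (hE.eigenvectorUnitary : Matrix m m ℝ) with hUdef
  have hU1 : U * star U = 1 := (mem_unitaryGroup_iff).mp hE.eigenvectorUnitary.2
  have hU2 : star U * U = 1 := (mem_unitaryGroup_iff').mp hE.eigenvectorUnitary.2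
  set d : m → ℝ := hE.eigenvalues with hddef
  have hspec : E = U * diagonal d * star U := by
    have := hE.spectral_theorem
    simpa [RCLike.ofReal_real_eq_id] using this
  refine ⟨U * diagonal (fun i => max (d i) 0) * star U,
          U * diagonal (fun i => max (-d i) 0) * star U, ?_, ?_, ?_, ?_, ?_, ?_, ?_⟩
  · have : (diagonal (fun i => max (d i) 0) : Matrix m m ℝ).PosSemidef :=
      posSemidef_diagonal_iff.mpr fun i => le_max_right _ _
    simpa [Matrix.star_eq_conjTranspose] using this.mul_mul_conjTranspose_same U
  · have : (diagonal (fun i => max (-d i) 0) : Matrix m m ℝ).PosSemidef :=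
      posSemidef_diagonal_iff.mpr fun i => le_max_right _ _
    simpa [Matrix.star_eq_conjTranspose] using this.mul_mul_conjTranspose_same U
  · rw [hspec, ← Matrix.sub_mul, ← Matrix.mul_sub, diagonal_sub]
    exact conj_diag_congr fun i => ((max_scalar (d i)).1).symm
  · rw [conj_mul hU2, diagonal_mul_diagonal]
    have : (fun i => max (d i) 0 * max (-d i) 0) = fun _ : m => (0 : ℝ) := by
      funext i
      exact (max_scalar (d i)).2.1
    rw [this]
    simp
  · rw [conj_mul hU2, diagonal_mul_diagonal]
    have : (fun i => max (-d i) 0 * max (d i) 0) = fun _ : m => (0 : ℝ) := by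
      funext i
      rw [mul_comm]
      exact (max_scalar (d i)).2.1
    rw [this]
    simp
  · have hP : (diagonal (fun i => max (d i) 0 + max (-d i) 0) : Matrix m m ℝ).PosSemidef :=
      posSemidef_diagonal_iff.mpr fun i => add_nonneg (le_max_right _ _) (le_max_right _ _)
    have := hP.mul_mul_conjTranspose_same U
    have heq : U * diagonal (fun i => max (d i) 0 + max (-d i) 0) * Uᴴ
        = U * diagonal (fun i => max (d i) 0) * star U
          + U * diagonal (fun i => max (-d i) 0) * star U := by
      rw [← Matrix.add_mul, ← Matrix.mul_add, diagonal_add]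
      rfl
    rwa [heq] at this
  · have heq : U * diagonal (fun i => max (d i) 0) * star U
        + U * diagonal (fun i => max (-d i) 0) * star U
        = U * diagonal (fun i => max (d i) 0 + max (-d i) 0) * star U := by
      rw [← Matrix.add_mul, ← Matrix.mul_add, diagonal_add]
    rw [heq, conj_pow hU1 hU2, hspec, conj_pow hU1 hU2]
    exact conj_diag_congr fun i => by simpa [pow_two] using (max_scalar (d i)).2.2

end WassersteinAux

open WassersteinAux in
/-- For commuting PSD matrices, `Tr(Σ₁ + Σ₂ − 2(Σ₁^{1/2}Σ₂Σ₁^{1/2})^{1/2}) ≤ Tr|Σ₁ − Σ₂|`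
(the nuclear norm of `Σ₁ − Σ₂`), hence the Gelbrich squared 2-Wasserstein distance
between `N(μ₁,Σ₁)` and `N(μ₂,Σ₂)` is at most `‖μ₁ − μ₂‖₂² + ‖Σ₁ − Σ₂‖₊`. -/
theorem wasserstein_nuclear_bound {n : ℕ} (μ₁ μ₂ : Fin n → ℝ)
    (S₁ S₂ : Matrix (Fin n) (Fin n) ℝ)
    (h₁ : S₁.PosSemidef) (h₂ : S₂.PosSemidef) (hcomm : S₁ * S₂ = S₂ * S₁)
    (hM : (h₁.sqrt * S₂ * h₁.sqrt).PosSemidef) :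
    (S₁.trace + S₂.trace - 2 * hM.sqrt.trace)
      ≤ (Matrix.posSemidef_conjTranspose_mul_self (S₁ - S₂)).sqrt.trace ∧
    (∑ i, (μ₁ i - μ₂ i) ^ 2) + (S₁.trace + S₂.trace - 2 * hM.sqrt.trace)
      ≤ (∑ i, (μ₁ i - μ₂ i) ^ 2)
        + (Matrix.posSemidef_conjTranspose_mul_self (S₁ - S₂)).sqrt.trace := by
  classical
  have hA : (h₁.sqrt).PosSemidef := h₁.posSemidef_sqrt
  have hB : (h₂.sqrt).PosSemidef := h₂.posSemidef_sqrt
  set A := h₁.sqrt with hAdef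
  set B := h₂.sqrt with hBdef
  have c12 : Commute S₁ S₂ := hcomm
  have cS2A : Commute S₂ A := sqrt_commute h₁ c12.symm
  have cAB : Commute A B := sqrt_commute h₂ cS2A.symm
  have hAA : A * A = S₁ := h₁.sqrt_mul_self
  have hBB : B * B = S₂ := h₂.sqrt_mul_self
  have hA2 : A ^ 2 = S₁ := h₁.sq_sqrt
  have hB2 : B ^ 2 = S₂ := h₂.sq_sqrt
  have hABpsd : (A * B).PosSemidef := psd_mul_of_commute hA hB cAB
  -- `A * B` is the square root of `A * S₂ * A`
  have hASA : A * S₂ * A = S₁ * S₂ := by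
    rw [Matrix.mul_assoc, cS2A.eq, ← Matrix.mul_assoc, hAA]
  have hABsq : (A * B) ^ 2 = A * S₂ * A := by
    rw [cAB.mul_pow, hA2, hB2, hASA]
  have hMs : A * B = hM.sqrt := hABpsd.eq_sqrt_of_sq_eq hM hABsq
  -- positive/negative parts of `A - B`
  have hEH : (A - B).IsHermitian := hA.1.sub hB.1
  obtain ⟨P, Q, hP, hQ, hEPQ, hPQ, hQP, hPQpsd, hPQsq⟩ := posPart hEH
  have hF : (A + B).PosSemidef := hA.add hB
  have cEF : Commute (A - B) (A + B) := by
    show (A - B) * (A + B) = (A + B) * (A - B)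
    simp only [Matrix.sub_mul, Matrix.mul_sub, Matrix.add_mul, Matrix.mul_add]
    rw [cAB.eq]
    abel
  have hE2 : ((A - B) ^ 2).PosSemidef := by
    have := Matrix.posSemidef_conjTranspose_mul_self (A - B)
    rwa [hEH.eq, ← pow_two] at this
  have hPQeq : P + Q = hE2.sqrt := hPQpsd.eq_sqrt_of_sq_eq hE2 hPQsq
  have cF_PQ : Commute (A + B) (P + Q) := by
    rw [hPQeq]
    exact sqrt_commute hE2 (cEF.symm.pow_right 2)
  have hPQF : ((P + Q) * (A + B)).PosSemidef := psd_mul_of_commute hPQpsd hF cF_PQ.symm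
  have hDEF : S₁ - S₂ = (A - B) * (A + B) := by
    simp only [Matrix.sub_mul, Matrix.mul_add]
    rw [hAA, hBB, cAB.eq]
    abel
  have hDH : (S₁ - S₂)ᴴ = S₁ - S₂ := (h₁.1.sub h₂.1).eq
  have hsqN : ((P + Q) * (A + B)) ^ 2 = (S₁ - S₂)ᴴ * (S₁ - S₂) := by
    rw [hDH, ← pow_two, hDEF, cEF.mul_pow, cF_PQ.symm.mul_pow, hPQsq]
  have hNs : (P + Q) * (A + B) = (Matrix.posSemidef_conjTranspose_mul_self (S₁ - S₂)).sqrt :=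
    hPQF.eq_sqrt_of_sq_eq _ hsqN
  -- trace computations
  have hEE : (A - B) * (A - B) = S₁ + S₂ - (A * B) - (A * B) := by
    simp only [Matrix.sub_mul, Matrix.mul_sub]
    rw [hAA, hBB, ← cAB.eq]
    abel
  have tEE : ((A - B) * (A - B)).trace = S₁.trace + S₂.trace - 2 * (A * B).trace := by
    rw [hEE]
    simp only [Matrix.trace_sub, Matrix.trace_add]
    ring
  have tPQ : ((A - B) * (A - B)).trace = (P * P).trace + (Q * Q).trace := by
    rw [hEPQ]
    simp only [Matrix.sub_mul, Matrix.mul_sub, hPQ, hQP]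
    simp only [Matrix.trace_sub, Matrix.trace_zero]
    ring
  have tN : ((P + Q) * (A + B)).trace = (P * (A + B)).trace + (Q * (A + B)).trace := by
    rw [Matrix.add_mul, Matrix.trace_add]
  have i1 : (P * P).trace ≤ (P * (A + B)).trace := by
    have e1 : P * (A - B) = P * P := by
      rw [hEPQ, Matrix.mul_sub, hPQ, sub_zero]
    have e2 : P * (A + B) - P * P = P * (B + B) := by
      rw [← e1, ← Matrix.mul_sub]
      congr 1
      abel
    have h0 : 0 ≤ (P * (B + B)).trace := trace_mul_nonneg hP (hB.add hB)
    rw [← e2, Matrix.trace_sub] at h0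
    linarith
  have i2 : (Q * Q).trace ≤ (Q * (A + B)).trace := by
    have e1 : Q * (A - B) = 0 - Q * Q := by
      rw [hEPQ, Matrix.mul_sub, hQP]
    have e2 : Q * (A + B) - Q * Q = Q * (A + A) := by
      have : Q * (A + B) + Q * (A - B) = Q * (A + A) := by
        rw [← Matrix.mul_add]
        congr 1
        abel
      rw [e1] at this
      rw [← this]
      abel
    have h0 : 0 ≤ (Q * (A + A)).trace := trace_mul_nonneg hQ (hA.add hA)
    rw [← e2, Matrix.trace_sub] at h0
    linarith
  have main : (S₁.trace + S₂.trace - 2 * hM.sqrt.trace)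
      ≤ (Matrix.posSemidef_conjTranspose_mul_self (S₁ - S₂)).sqrt.trace := by
    rw [← hMs, ← hNs]
    linarith [tEE, tPQ, tN, i1, i2]
  exact ⟨main, add_le_add_right main _⟩
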